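/- On S^d, for every N: if N is even, the maximal sum of pairwise geodesic distances satisfies θ_N = sup_{D_N} Σ_{x_i,x_j ∈ D_N} θ(x_i,x_j) = (π/2)N², attained by any antipodally symmetric configuration; if N is odd, θ_N ≥ (π/2)N² − π² (in particular (π/2)N² − θ_N ≤ π² for odd N ≥ 1, achieved by adding one point to an antipodal configuration). -/

import Mathlib

/-!
Since `θ(x, y) = π/2 - arcsin ⟨x, y⟩`, the upper bound `(π/2) N²` says that
`∑ᵢⱼ arcsin ⟨xᵢ, xⱼ⟩ ≥ 0`. The Taylor series
`arcsin t = ∑ C(2n, n) / (4ⁿ (2n + 1)) t^(2n+1)` has nonnegative coefficients, and by the Schur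
product theorem every entrywise power of the Gram matrix of the `xᵢ` is positive semidefinite, so
each term of the series contributes a nonnegative amount. The series itself is obtained by
integrating `(1 - x)^(-1/2) = ∑ C(2n, n) / 4ⁿ xⁿ` at `x = t²`.

Since `θ(x, -y) = π - θ(x, y)`, any point sees an antipodal pair at total distance `π`. An
antipodally symmetric configuration of `2a` points therefore attains `(π/2)(2a)²`, and adding one
more point gives `(π/2)(N² - 1)` for `N = 2a + 1`.
-/

open Real

noncomputable section

/-- Geodesic distance on the unit sphere. -/
def geoDist {d : ℕ} (x y : Metric.sphere (0 : EuclideanSpace ℝ (Fin (d + 1))) 1) : ℝ :=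
  arccos (inner ℝ (x : EuclideanSpace ℝ (Fin (d + 1))) (y : EuclideanSpace ℝ (Fin (d + 1))) : ℝ)

def invSqrtCoeff (n : ℕ) : ℝ := n.centralBinom / 4 ^ n

def arcsinCoeff (n : ℕ) : ℝ := invSqrtCoeff n / (2 * n + 1)

lemma invSqrtCoeff_nonneg (n : ℕ) : 0 ≤ invSqrtCoeff n := by
  unfold invSqrtCoeff; positivity

lemma abs_invSqrtCoeff_le_one (n : ℕ) : |invSqrtCoeff n| ≤ 1 := by
  rw [abs_of_nonneg (invSqrtCoeff_nonneg n), invSqrtCoeff, div_le_one (by positivity)]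
  exact_mod_cast n.centralBinom_le_four_pow

lemma invSqrtCoeff_zero : invSqrtCoeff 0 = 1 := by simp [invSqrtCoeff]

lemma two_mul_succ_mul_invSqrtCoeff_succ (n : ℕ) :
    2 * (n + 1) * invSqrtCoeff (n + 1) = (2 * n + 1) * invSqrtCoeff n := by
  have h : ((n : ℝ) + 1) * (n + 1).centralBinom = 2 * (2 * n + 1) * n.centralBinom := by
    exact_mod_cast n.succ_mul_centralBinom_succ
  simp only [invSqrtCoeff, pow_succ]
  field_simp
  linear_combination 2 * h

lemma arcsinCoeff_nonneg (n : ℕ) : 0 ≤ arcsinCoeff n :=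
  div_nonneg (invSqrtCoeff_nonneg n) (by positivity)

lemma abs_arcsinCoeff_le_one (n : ℕ) : |arcsinCoeff n| ≤ 1 := by
  rw [arcsinCoeff, abs_div]
  refine div_le_one_of_le₀ ((abs_invSqrtCoeff_le_one n).trans ?_) (abs_nonneg _)
  rw [abs_of_nonneg (by positivity)]
  linarith [(n.cast_nonneg : (0 : ℝ) ≤ n)]

lemma two_mul_add_one_mul_arcsinCoeff (n : ℕ) :
    (2 * n + 1) * arcsinCoeff n = invSqrtCoeff n := by
  rw [arcsinCoeff]; field_simp

section PowerSeries

variable {a : ℕ → ℝ} {x : ℝ}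

lemma summable_mul_pow_of_abs_le_one (ha : ∀ n, |a n| ≤ 1) (hx : |x| < 1) :
    Summable fun n => a n * x ^ n :=
  .of_norm_bounded (summable_geometric_of_lt_one (abs_nonneg x) hx) fun n => by
    simpa [abs_mul, abs_pow] using mul_le_of_le_one_left (by positivity) (ha n)

lemma summable_natCast_mul_pow_pred {r : ℝ} (hr : ‖r‖ < 1) :
    Summable fun n : ℕ => (n : ℝ) * r ^ (n - 1) := by
  rw [← summable_nat_add_iff 1]
  have := (summable_pow_mul_geometric_of_norm_lt_one 1 hr).add
    (summable_geometric_of_norm_lt_one hr)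
  simpa [add_mul] using this

theorem hasDerivAt_tsum_mul_pow (ha : ∀ n, |a n| ≤ 1) (hx : |x| < 1) :
    HasDerivAt (fun y => ∑' n, a n * y ^ n) (∑' n, n * a n * x ^ (n - 1)) x := by
  obtain ⟨r, hxr, hr⟩ := exists_between hx
  have hr0 : 0 ≤ r := (abs_nonneg x).trans hxr.le
  refine hasDerivAt_tsum_of_isPreconnected (g := fun n y => a n * y ^ n)
    (g' := fun n y => n * a n * y ^ (n - 1))
    (summable_natCast_mul_pow_pred (by rwa [Real.norm_of_nonneg hr0])) isOpen_Ioo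
    isPreconnected_Ioo (fun n y _ => ?_) (fun n y hy => ?_) (abs_lt.mp hxr)
    (summable_mul_pow_of_abs_le_one ha hx) (abs_lt.mp hxr)
  · simpa [mul_comm, mul_assoc] using (hasDerivAt_pow n y).const_mul (a n)
  · have hy' : |y| ≤ r := abs_le.mpr ⟨hy.1.le, hy.2.le⟩
    rw [norm_mul, norm_mul, norm_pow, Real.norm_natCast, Real.norm_eq_abs, Real.norm_eq_abs]
    calc (n : ℝ) * |a n| * |y| ^ (n - 1) ≤ n * 1 * r ^ (n - 1) := by gcongr; exact ha n
      _ = n * r ^ (n - 1) := by ring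

lemma summable_natCast_mul_mul_pow_pred (ha : ∀ n, |a n| ≤ 1) (hx : |x| < 1) :
    Summable fun n : ℕ => n * a n * x ^ (n - 1) :=
  .of_norm_bounded (summable_natCast_mul_pow_pred (r := |x|) (by simpa)) fun n => by
    rw [norm_mul, norm_mul, norm_pow, Real.norm_natCast, Real.norm_eq_abs, Real.norm_eq_abs]
    exact mul_le_mul_of_nonneg_right (mul_le_of_le_one_right n.cast_nonneg (ha n)) (by positivity)

lemma natCast_mul_pow_pred_mul_self (n : ℕ) (x : ℝ) : n * x ^ (n - 1) * x = n * x ^ n := by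
  cases n <;> simp [pow_succ, mul_assoc]

lemma HasSum.natCast_mul_mul_pow {V : ℝ} (h : HasSum (fun n : ℕ => n * a n * x ^ (n - 1)) V) :
    HasSum (fun n : ℕ => n * a n * x ^ n) (x * V) := by
  have e : (fun n : ℕ => n * a n * x ^ n) = fun n => x * (n * a n * x ^ (n - 1)) :=
    funext fun n => by linear_combination (a n) * (natCast_mul_pow_pred_mul_self n x).symm
  exact e ▸ h.mul_left x

end PowerSeries

-- `U x = ∑ invSqrtCoeff n * xⁿ` satisfies `2 (1 - x) U' = U`, the ODE of `(1 - x)^(-1/2)`.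
lemma two_mul_one_sub_mul_tsum_invSqrtCoeff {x : ℝ} (hx : |x| < 1) :
    2 * (1 - x) * ∑' n : ℕ, n * invSqrtCoeff n * x ^ (n - 1) =
      ∑' n, invSqrtCoeff n * x ^ n := by
  have hV := (summable_natCast_mul_mul_pow_pred abs_invSqrtCoeff_le_one hx).hasSum
  have hshift := (hasSum_nat_add_iff' 1).mpr hV
  simp only [Finset.range_one, Finset.sum_singleton, CharP.cast_eq_zero, zero_mul, sub_zero,
    Nat.cast_add, Nat.cast_one, Nat.add_sub_cancel] at hshift
  refine .trans (by ring) (((hshift.sub hV.natCast_mul_mul_pow).mul_left 2).unique ?_)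
  have e : (fun n => invSqrtCoeff n * x ^ n) =
      fun n : ℕ => 2 * ((n + 1) * invSqrtCoeff (n + 1) * x ^ n - n * invSqrtCoeff n * x ^ n) :=
    funext fun n => by linear_combination (-x ^ n) * two_mul_succ_mul_invSqrtCoeff_succ n
  exact e ▸ (summable_mul_pow_of_abs_le_one abs_invSqrtCoeff_le_one hx).hasSum

theorem hasSum_invSqrtCoeff_mul_pow {x : ℝ} (hx : |x| < 1) :
    HasSum (fun n => invSqrtCoeff n * x ^ n) (1 / √(1 - x)) := by
  set U := fun y => ∑' n, invSqrtCoeff n * y ^ n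
  have hW : ∀ y ∈ Set.Ioo (-1 : ℝ) 1, HasDerivAt (fun y => U y * √(1 - y)) 0 y := by
    intro y hy
    have hy' : |y| < 1 := abs_lt.mpr hy
    have hpos : 0 < 1 - y := by linarith [hy.2]
    refine ((hasDerivAt_tsum_mul_pow abs_invSqrtCoeff_le_one hy').mul
      (((hasDerivAt_id' y).const_sub 1).sqrt hpos.ne')).congr_deriv ?_
    have hode := two_mul_one_sub_mul_tsum_invSqrtCoeff hy'
    field_simp
    rw [Real.sq_sqrt hpos.le]
    linear_combination hode
  have hconst : U x * √(1 - x) = U 0 * √(1 - 0) :=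
    isOpen_Ioo.is_const_of_deriv_eq_zero isPreconnected_Ioo
      (fun y hy => (hW y hy).differentiableAt.differentiableWithinAt)
      (fun y hy => (hW y hy).deriv) (abs_lt.mp hx) (by norm_num)
  have hU0 : U 0 = 1 := by
    simp only [U]
    rw [tsum_eq_single 0 (fun n hn => by simp [hn])]
    simp [invSqrtCoeff_zero]
  have hs := Real.sqrt_pos.mpr (show 0 < 1 - x by linarith [abs_lt.mp hx])
  rw [hU0, sub_zero, Real.sqrt_one, one_mul] at hconst
  rw [← (eq_div_iff hs.ne').mpr hconst]
  exact (summable_mul_pow_of_abs_le_one abs_invSqrtCoeff_le_one hx).hasSum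

lemma tsum_arcsinCoeff_add_two_mul_tsum {x : ℝ} (hx : |x| < 1) :
    ∑' n, arcsinCoeff n * x ^ n + 2 * (x * ∑' n : ℕ, n * arcsinCoeff n * x ^ (n - 1)) =
      1 / √(1 - x) := by
  have hA := (summable_mul_pow_of_abs_le_one abs_arcsinCoeff_le_one hx).hasSum
  have hV := (summable_natCast_mul_mul_pow_pred abs_arcsinCoeff_le_one hx).hasSum
  refine (hA.add (hV.natCast_mul_mul_pow.mul_left 2)).unique ?_
  have e : (fun n : ℕ => arcsinCoeff n * x ^ n + 2 * (n * arcsinCoeff n * x ^ n)) =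
      fun n => invSqrtCoeff n * x ^ n :=
    funext fun n => by rw [← two_mul_add_one_mul_arcsinCoeff]; ring
  exact e ▸ hasSum_invSqrtCoeff_mul_pow hx

theorem hasSum_arcsinCoeff_mul_pow {t : ℝ} (ht : |t| < 1) :
    HasSum (fun n => arcsinCoeff n * t ^ (2 * n + 1)) (arcsin t) := by
  set A := fun y => ∑' n, arcsinCoeff n * y ^ n
  have hsq {y : ℝ} (hy : y ∈ Set.Ioo (-1 : ℝ) 1) : |y ^ 2| < 1 := by
    rw [abs_pow]; exact pow_lt_one₀ (abs_nonneg y) (abs_lt.mpr hy) two_ne_zero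
  have hderiv : ∀ y ∈ Set.Ioo (-1 : ℝ) 1,
      HasDerivAt (fun y => y * A (y ^ 2)) (1 / √(1 - y ^ 2)) y := by
    intro y hy
    have hA : HasDerivAt (fun y => A (y ^ 2)) _ y :=
      (hasDerivAt_tsum_mul_pow abs_arcsinCoeff_le_one (hsq hy)).comp (h := (· ^ 2)) y
        (hasDerivAt_pow 2 y)
    refine ((hasDerivAt_id' y).mul hA).congr_deriv ?_
    rw [← tsum_arcsinCoeff_add_two_mul_tsum (hsq hy)]
    ring
  have harcsin : ∀ y ∈ Set.Ioo (-1 : ℝ) 1, HasDerivAt arcsin (1 / √(1 - y ^ 2)) y :=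
    fun y hy => hasDerivAt_arcsin (by linarith [hy.1]) (by linarith [hy.2])
  have heq : Set.EqOn (fun y => y * A (y ^ 2)) arcsin (Set.Ioo (-1) 1) :=
    isOpen_Ioo.eqOn_of_deriv_eq isPreconnected_Ioo
      (fun y hy => (hderiv y hy).differentiableAt.differentiableWithinAt)
      (fun y hy => (harcsin y hy).differentiableAt.differentiableWithinAt)
      (fun y hy => (hderiv y hy).deriv.trans (harcsin y hy).deriv.symm)
      (x := 0) (by norm_num) (by simp)
  rw [← heq (abs_lt.mp ht)]
  have e : (fun n => arcsinCoeff n * t ^ (2 * n + 1)) =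
      fun n => t * (arcsinCoeff n * (t ^ 2) ^ n) :=
    funext fun n => by ring
  exact e ▸ (summable_mul_pow_of_abs_le_one abs_arcsinCoeff_le_one
    (hsq (abs_lt.mp ht))).hasSum.mul_left t

namespace Matrix

open scoped ComplexOrder

variable {ι 𝕜 : Type*} [RCLike 𝕜] {A : Matrix ι ι 𝕜}

lemma PosSemidef.map_pow_succ (hA : A.PosSemidef) (m : ℕ) :
    (A.map (· ^ (m + 1))).PosSemidef := by
  induction m with
  | zero => simpa using hA
  | succ m ih =>
    have h : A.map (· ^ (m + 2)) = A.map (· ^ (m + 1)) ⊙ A := by ext; simp [pow_succ]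
    exact h ▸ ih.hadamard hA

lemma PosSemidef.sum_sum_apply_nonneg [Fintype ι] (hA : A.PosSemidef) :
    0 ≤ ∑ i, ∑ j, A i j := by
  simpa [dotProduct, mulVec, Finset.sum_comm (γ := ι)] using hA.dotProduct_mulVec_nonneg 1

end Matrix

theorem sum_sum_arcsin_inner_nonneg {E ι : Type*} [NormedAddCommGroup E] [InnerProductSpace ℝ E]
    [Fintype ι] (v : ι → E) (hv : ∀ i, ‖v i‖ ≤ 1) :
    0 ≤ ∑ i, ∑ j, arcsin (inner ℝ (v i) (v j)) := by
  have habs i j : |inner ℝ (v i) (v j)| ≤ 1 :=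
    (abs_real_inner_le_norm _ _).trans (mul_le_one₀ (hv i) (norm_nonneg _) (hv j))
  -- The arcsin series need not converge at `±1`, so shrink the inner products by `ρ < 1` first.
  have hscaled : ∀ ρ ∈ Set.Ioo (0 : ℝ) 1,
      0 ≤ ∑ i, ∑ j, arcsin (ρ * inner ℝ (v i) (v j)) := by
    intro ρ hρ
    have hlt i j : |ρ * inner ℝ (v i) (v j)| < 1 := by
      rw [abs_mul, abs_of_pos hρ.1]
      exact (mul_le_of_le_one_right hρ.1.le (habs i j)).trans_lt hρ.2
    refine HasSum.nonneg (fun n => ?_)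
      (hasSum_sum fun i _ => hasSum_sum fun j _ => hasSum_arcsinCoeff_mul_pow (hlt i j))
    have hpsd := (Matrix.posSemidef_gram ℝ v).map_pow_succ (2 * n)
    simp only [mul_pow, ← mul_assoc, ← Finset.mul_sum]
    exact mul_nonneg (mul_nonneg (arcsinCoeff_nonneg n) (pow_nonneg hρ.1.le _))
      hpsd.sum_sum_apply_nonneg
  have hlim : Filter.Tendsto (fun ρ : ℝ => ∑ i, ∑ j, arcsin (ρ * inner ℝ (v i) (v j)))
      (nhdsWithin 1 (Set.Iio 1)) (nhds (∑ i, ∑ j, arcsin (1 * inner ℝ (v i) (v j)))) :=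
    ((continuous_finsetSum _ fun i _ => continuous_finsetSum _ fun j _ =>
      continuous_arcsin.comp (continuous_mul_const _)).tendsto 1).mono_left nhdsWithin_le_nhds
  simp only [one_mul] at hlim
  exact ge_of_tendsto hlim (Filter.eventually_of_mem (Ioo_mem_nhdsLT one_pos) hscaled)

section Sphere

variable {d : ℕ} {ι : Type*} [Fintype ι]

local notation "𝕊" => Metric.sphere (0 : EuclideanSpace ℝ (Fin (d + 1))) 1

lemma geoDist_eq_pi_div_two_sub_arcsin (x y : 𝕊) :
    geoDist x y = π / 2 - arcsin (inner ℝ (x : EuclideanSpace ℝ (Fin (d + 1))) y) :=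
  arccos_eq_pi_div_two_sub_arcsin _

@[simp]
lemma geoDist_self (x : 𝕊) : geoDist x x = 0 := by
  rw [geoDist, real_inner_self_eq_norm_sq, norm_eq_of_mem_sphere, one_pow, arccos_one]

@[simp]
lemma geoDist_neg_left (x y : 𝕊) : geoDist (-x) y = π - geoDist x y := by
  rw [geoDist, geoDist, coe_neg_sphere, inner_neg_left, arccos_neg]

@[simp]
lemma geoDist_neg_right (x y : 𝕊) : geoDist x (-y) = π - geoDist x y := by
  rw [geoDist, geoDist, coe_neg_sphere, inner_neg_right, arccos_neg]

theorem sum_sum_geoDist_le (D : ι → 𝕊) :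
    ∑ i, ∑ j, geoDist (D i) (D j) ≤ π / 2 * Fintype.card ι ^ 2 := by
  have h := sum_sum_arcsin_inner_nonneg (fun i => (D i : EuclideanSpace ℝ (Fin (d + 1))))
    fun i => (norm_eq_of_mem_sphere (D i)).le
  simp only [geoDist_eq_pi_div_two_sub_arcsin, Finset.sum_sub_distrib, Finset.sum_const,
    Finset.card_univ, nsmul_eq_mul]
  nlinarith

def withAntipodes (E : ι → 𝕊) : ι ⊕ ι → 𝕊 := Sum.elim E fun k => -E k

lemma sum_geoDist_withAntipodes_right (x : 𝕊) (E : ι → 𝕊) :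
    ∑ j, geoDist x (withAntipodes E j) = π * Fintype.card ι := by
  simp [withAntipodes, Fintype.sum_sum_type, Finset.sum_sub_distrib, mul_comm]

lemma sum_geoDist_withAntipodes_left (x : 𝕊) (E : ι → 𝕊) :
    ∑ i, geoDist (withAntipodes E i) x = π * Fintype.card ι := by
  simp [withAntipodes, Fintype.sum_sum_type, Finset.sum_sub_distrib, mul_comm]

theorem sum_sum_geoDist_withAntipodes (E : ι → 𝕊) :
    ∑ i, ∑ j, geoDist (withAntipodes E i) (withAntipodes E j) =
      π / 2 * (2 * Fintype.card ι) ^ 2 := by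
  simp only [sum_geoDist_withAntipodes_right, Finset.sum_const, Finset.card_univ,
    Fintype.card_sum, nsmul_eq_mul]
  push_cast
  ring

theorem sum_sum_geoDist_withAntipodes_add_point (E : ι → 𝕊) (p : 𝕊) :
    ∑ i : Option (ι ⊕ ι), ∑ j : Option (ι ⊕ ι),
        geoDist (i.elim p (withAntipodes E)) (j.elim p (withAntipodes E)) =
      π / 2 * ((2 * Fintype.card ι + 1) ^ 2 - 1) := by
  simp only [Fintype.sum_option, Option.elim_none, Option.elim_some, geoDist_self,
    sum_geoDist_withAntipodes_right, sum_geoDist_withAntipodes_left, Finset.sum_add_distrib,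
    Finset.sum_const, Finset.card_univ, Fintype.card_option, Fintype.card_sum, nsmul_eq_mul]
  push_cast
  ring

end Sphere

/-- On `S^d`: the sum of pairwise geodesic distances of any `N`-point configuration
is at most `(π/2)N²`; if `N = 2a` is even this bound is attained by every
antipodally symmetric configuration (hence `θ_N = (π/2)N²`); and if `N` is odd there
is a configuration with sum at least `(π/2)N² − π²` (so `(π/2)N² − θ_N ≤ π²`). -/
theorem sum_geodesic_distances_sphere (d N : ℕ) :
    (∀ D : Fin N → Metric.sphere (0 : EuclideanSpace ℝ (Fin (d + 1))) 1,
      ∑ i, ∑ j, geoDist (D i) (D j) ≤ (π / 2) * (N : ℝ) ^ 2) ∧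
    (∀ a : ℕ, N = 2 * a →
      ∀ E : Fin a → Metric.sphere (0 : EuclideanSpace ℝ (Fin (d + 1))) 1,
        (∑ i : Fin a ⊕ Fin a, ∑ j : Fin a ⊕ Fin a,
            geoDist (Sum.elim E (fun k => -E k) i) (Sum.elim E (fun k => -E k) j))
          = (π / 2) * (N : ℝ) ^ 2) ∧
    (Odd N →
      ∃ D : Fin N → Metric.sphere (0 : EuclideanSpace ℝ (Fin (d + 1))) 1,
        (π / 2) * (N : ℝ) ^ 2 - π ^ 2 ≤ ∑ i, ∑ j, geoDist (D i) (D j)) := by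
  refine ⟨fun D => by simpa using sum_sum_geoDist_le D, ?_, ?_⟩
  · rintro a rfl E
    have h := sum_sum_geoDist_withAntipodes E
    rw [Fintype.card_fin] at h
    exact_mod_cast h
  · rintro ⟨a, rfl⟩
    obtain ⟨p⟩ : Nonempty (Metric.sphere (0 : EuclideanSpace ℝ (Fin (d + 1))) 1) :=
      (NormedSpace.sphere_nonempty.mpr zero_le_one).to_subtype
    let e : Fin (2 * a + 1) ≃ Option (Fin a ⊕ Fin a) := Fintype.equivOfCardEq (by
      simp only [Fintype.card_fin, Fintype.card_option, Fintype.card_sum]; ring)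
    let D i : Metric.sphere (0 : EuclideanSpace ℝ (Fin (d + 1))) 1 :=
      (e i).elim p (withAntipodes fun _ => p)
    refine ⟨D, ?_⟩
    calc _ ≤ π / 2 * ((2 * Fintype.card (Fin a) + 1) ^ 2 - 1) := by
          simp only [Fintype.card_fin]; push_cast; nlinarith [pi_gt_three]
      _ = _ := (sum_sum_geoDist_withAntipodes_add_point (fun _ => p) p).symm
      _ = ∑ i, ∑ j, geoDist (D i) (D j) :=
          (Fintype.sum_equiv e _ _ fun i => Fintype.sum_equiv e (fun j => geoDist (D i) (D j)) _
            fun _ => rfl).symm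

end
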